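/- arXiv:1205.2260 — 2 statements merged into one kernel-verified Lean document; each statement's English description precedes it below -/
import Mathlib

section
/- The bottom of the numerical range (hence of the spectrum) of the two-dimensional atomic Hamiltonian h_{N,Z} = Σᵢ(−Δ_{ϱᵢ}) + 𝒱_{2D} on H¹(ℝ^{2N}) is bounded below by −(Γ(1/4)⁴ √N Z / (8π²))². -/
/-!
In the plane the unit radial field `ϱ / |ϱ|` has divergence `1 / |ϱ|`, so integrating it by parts
against `|ψ|²` in the variable `ϱᵢ` of one electron gives `∫ |ψ|² / |ϱᵢ| ≤ ∫ |∇_{ϱᵢ} |ψ|²|`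
(with the field smoothed to `ϱ / √(δ + |ϱ|²)`, whose divergence still dominates
`1 / √(δ + |ϱ|²)`, and `δ → 0` by Fatou's lemma). Summing over the electrons by Cauchy–Schwarz and
using `|∇|ψ|²| ≤ 2 |ψ| |∇ψ|` bounds the nuclear attraction by `2 |Z| √N ‖ψ‖ ‖∇ψ‖`, while the
electron repulsion is nonnegative. With `t = ‖∇ψ‖` the energy is therefore at least
`t² - 2 |Z| √N t ≥ -N Z²`, and `N Z²` is below the claimed constant because `Γ(1/4)⁴ ≥ 8 π²`
(reflection formula plus convexity of `Γ` between `1/2` and `1`).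
-/

open MeasureTheory Real

/-- The two-dimensional `N`-electron atomic potential
`𝒱_{2D}(x) = -Z Σᵢ 1/|ϱᵢ| + Σ_{i<j} 1/|ϱᵢ - ϱⱼ|`, with `ϱᵢ = (x (i,0), x (i,1)) ∈ ℝ²`. -/
noncomputable def V2D (N : ℕ) (Z : ℝ) (x : EuclideanSpace ℝ (Fin N × Fin 2)) : ℝ :=
  -Z * ∑ i : Fin N, (Real.sqrt ((x (i, 0)) ^ 2 + (x (i, 1)) ^ 2))⁻¹ +
    ∑ p ∈ Finset.univ.filter (fun p : Fin N × Fin N => p.1 < p.2),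
      (Real.sqrt ((x (p.1, 0) - x (p.2, 0)) ^ 2 + (x (p.1, 1) - x (p.2, 1)) ^ 2))⁻¹

open Filter Topology
open scoped Gradient SchwartzMap

lemma Gamma_three_fourths_le : Gamma (3 / 4) ≤ (√π + 1) / 2 := by
  have h := convexOn_Gamma.2 (Set.mem_Ioi.mpr (by norm_num : (0 : ℝ) < 1 / 2))
    (Set.mem_Ioi.mpr one_pos) (by norm_num : (0 : ℝ) ≤ 1 / 2) (by norm_num : (0 : ℝ) ≤ 1 / 2)
    (by norm_num)
  norm_num [Gamma_one_half_eq] at h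
  linarith

lemma Gamma_one_fourth_mul_Gamma_three_fourths : Gamma (1 / 4) * Gamma (3 / 4) = π * √2 := by
  have h := Gamma_mul_Gamma_one_sub (1 / 4)
  rw [show (1 : ℝ) - 1 / 4 = 3 / 4 by norm_num, show π * (1 / 4) = π / 4 by ring,
    sin_pi_div_four] at h
  rw [h]
  field_simp
  rw [sq_sqrt zero_le_two]

lemma eight_mul_pi_sq_le_Gamma_one_fourth_pow_four : 8 * π ^ 2 ≤ Gamma (1 / 4) ^ 4 := by
  have hs : 0 < √π + 1 := by positivity
  have hlow : π * √2 * 2 / (√π + 1) ≤ Gamma (1 / 4) := by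
    rw [div_le_iff₀ hs, ← Gamma_one_fourth_mul_Gamma_three_fourths, mul_assoc]
    gcongr
    linarith [Gamma_three_fourths_le]
  -- numerically `(√π + 1) ^ 4 ≈ 59 < 8 π ^ 2 ≈ 79`
  have hnum : (√π + 1) ^ 4 ≤ 8 * π ^ 2 := by
    have hsπ : √π ≤ 1.8 := by
      rw [sqrt_le_iff]; constructor <;> norm_num; linarith [pi_lt_d2]
    nlinarith [sqrt_nonneg π, sq_sqrt pi_pos.le, pi_gt_d6]
  calc 8 * π ^ 2 ≤ 64 * π ^ 4 / (√π + 1) ^ 4 := by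
        rw [le_div_iff₀ (by positivity)]; nlinarith [pi_pos]
    _ = (π * √2 * 2 / (√π + 1)) ^ 4 := by
        rw [div_pow, mul_pow, mul_pow, show √2 ^ 4 = (√2 ^ 2) ^ 2 by ring, sq_sqrt zero_le_two]
        ring
    _ ≤ Gamma (1 / 4) ^ 4 := by gcongr

theorem integrable_and_integral_le_of_tendsto {α : Type*} [MeasurableSpace α] {μ : Measure α}
    {f : ℕ → α → ℝ} {F : α → ℝ} {K : ℝ} (hf0 : ∀ n x, 0 ≤ f n x)
    (hf : ∀ n, Integrable (f n) μ) (hK : ∀ n, ∫ x, f n x ∂μ ≤ K)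
    (hlim : ∀ᵐ x ∂μ, Tendsto (fun n ↦ f n x) atTop (𝓝 (F x))) :
    Integrable F μ ∧ ∫ x, F x ∂μ ≤ K := by
  have hFm : AEStronglyMeasurable F μ :=
    aestronglyMeasurable_of_tendsto_ae _ (fun n ↦ (hf n).1) hlim
  have hF0 : 0 ≤ᵐ[μ] F := hlim.mono fun x hx ↦ ge_of_tendsto' hx fun n ↦ hf0 n x
  have hK0 : 0 ≤ K := (integral_nonneg (hf0 0)).trans (hK 0)
  have hlint : ∫⁻ x, ENNReal.ofReal (F x) ∂μ ≤ ENNReal.ofReal K :=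
    calc ∫⁻ x, ENNReal.ofReal (F x) ∂μ
        = ∫⁻ x, liminf (fun n ↦ ENNReal.ofReal (f n x)) atTop ∂μ :=
          lintegral_congr_ae <| hlim.mono fun x hx ↦
            ((ENNReal.continuous_ofReal.tendsto _).comp hx).liminf_eq.symm
      _ ≤ liminf (fun n ↦ ∫⁻ x, ENNReal.ofReal (f n x) ∂μ) atTop :=
          lintegral_liminf_le' fun n ↦ (hf n).1.aemeasurable.ennreal_ofReal
      _ ≤ ENNReal.ofReal K := liminf_le_of_frequently_le' <| Frequently.of_forall fun n ↦ by
          rw [← ofReal_integral_eq_lintegral_ofReal (hf n) (ae_of_all _ (hf0 n))]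
          exact ENNReal.ofReal_le_ofReal (hK n)
  refine ⟨⟨hFm, (hasFiniteIntegral_iff_ofReal hF0).2 (hlint.trans_lt ENNReal.ofReal_lt_top)⟩, ?_⟩
  rw [integral_eq_lintegral_of_nonneg_ae hF0 hFm]
  exact ENNReal.toReal_le_of_le_ofReal hK0 hlint

lemma integral_mul_le_sqrt_integral_sq_mul_sqrt {α : Type*} [MeasurableSpace α] {μ : Measure α}
    {f g : α → ℝ} (hf0 : 0 ≤ᵐ[μ] f) (hg0 : 0 ≤ᵐ[μ] g) (hf : MemLp f 2 μ) (hg : MemLp g 2 μ) :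
    ∫ x, f x * g x ∂μ ≤ √(∫ x, f x ^ 2 ∂μ) * √(∫ x, g x ^ 2 ∂μ) := by
  have h := integral_mul_le_Lp_mul_Lq_of_nonneg Real.HolderConjugate.two_two hf0 hg0
    (by simpa using hf) (by simpa using hg)
  simpa [sqrt_eq_rpow] using h

lemma abs_mul_add_mul_le_sqrt {p q u v : ℝ} (h : p ^ 2 + q ^ 2 ≤ 1) :
    |p * u + q * v| ≤ √(u ^ 2 + v ^ 2) :=
  abs_le_sqrt <| by nlinarith [sq_nonneg (p * v - q * u), sq_nonneg u, sq_nonneg v]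

section Planar

variable {ι : Type*}

local notation "E" => EuclideanSpace ℝ ι

noncomputable def planarNorm (a b : ι) (x : E) : ℝ := √(x a ^ 2 + x b ^ 2)

noncomputable def smoothedPlanarNorm (δ : ℝ) (a b : ι) (x : E) : ℝ := √(δ + x a ^ 2 + x b ^ 2)

/-- For `j ∈ {a, b}`, the `j`-th component of the field `ϱ / √(δ + |ϱ|²)`, `ϱ = (x a, x b)`. -/
noncomputable def smoothedRadialField (δ : ℝ) (a b j : ι) (x : E) : ℝ :=
  x j * (smoothedPlanarNorm δ a b x)⁻¹

variable {a b j : ι} {δ : ℝ}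

lemma continuous_planarNorm : Continuous (planarNorm (ι := ι) a b) := by
  unfold planarNorm; fun_prop

lemma continuous_smoothedPlanarNorm : Continuous (smoothedPlanarNorm (ι := ι) δ a b) := by
  unfold smoothedPlanarNorm; fun_prop

lemma smoothedPlanarNorm_sq (hδ : 0 ≤ δ) (x : E) :
    smoothedPlanarNorm δ a b x ^ 2 = δ + x a ^ 2 + x b ^ 2 :=
  sq_sqrt (by positivity)

lemma sqrt_le_smoothedPlanarNorm (x : E) : √δ ≤ smoothedPlanarNorm δ a b x :=
  sqrt_le_sqrt (by nlinarith [sq_nonneg (x a), sq_nonneg (x b)])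

lemma smoothedPlanarNorm_pos (hδ : 0 < δ) (x : E) : 0 < smoothedPlanarNorm δ a b x :=
  (sqrt_pos.2 hδ).trans_le (sqrt_le_smoothedPlanarNorm x)

lemma inv_smoothedPlanarNorm_le (hδ : 0 < δ) (x : E) :
    (smoothedPlanarNorm δ a b x)⁻¹ ≤ (√δ)⁻¹ :=
  inv_anti₀ (sqrt_pos.2 hδ) (sqrt_le_smoothedPlanarNorm x)

lemma tendsto_smoothedPlanarNorm (x : E) :
    Tendsto (fun n : ℕ ↦ smoothedPlanarNorm (1 / (n + 1)) a b x) atTop (𝓝 (planarNorm a b x)) := by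
  have h := ((tendsto_one_div_add_atTop_nhds_zero_nat.add_const (x a ^ 2)).add_const
    (x b ^ 2)).sqrt
  simpa [smoothedPlanarNorm, planarNorm] using h

lemma abs_apply_le_smoothedPlanarNorm (hδ : 0 ≤ δ) (hj : j = a ∨ j = b) (x : E) :
    |x j| ≤ smoothedPlanarNorm δ a b x :=
  abs_le_sqrt <| by rcases hj with h | h <;> rw [h] <;> nlinarith [sq_nonneg (x a), sq_nonneg (x b)]

lemma continuous_smoothedRadialField (hδ : 0 < δ) :
    Continuous (smoothedRadialField (ι := ι) δ a b j) :=
  (PiLp.continuous_apply 2 _ j).mul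
    (continuous_smoothedPlanarNorm.inv₀ fun x ↦ (smoothedPlanarNorm_pos hδ x).ne')

lemma abs_smoothedRadialField_le_one (hδ : 0 < δ) (hj : j = a ∨ j = b) (x : E) :
    |smoothedRadialField δ a b j x| ≤ 1 := by
  have hs := smoothedPlanarNorm_pos (a := a) (b := b) hδ x
  rw [smoothedRadialField, abs_mul, abs_inv, abs_of_pos hs, ← div_eq_mul_inv, div_le_one hs]
  exact abs_apply_le_smoothedPlanarNorm hδ.le hj x

lemma smoothedRadialField_sq_add_sq_le_one (hδ : 0 < δ) (x : E) :
    smoothedRadialField δ a b a x ^ 2 + smoothedRadialField δ a b b x ^ 2 ≤ 1 := by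
  have hs := smoothedPlanarNorm_pos (a := a) (b := b) hδ x
  rw [smoothedRadialField, smoothedRadialField, mul_pow, mul_pow, ← add_mul, inv_pow,
    ← div_eq_mul_inv, div_le_one (by positivity), smoothedPlanarNorm_sq hδ.le]
  linarith

variable [Fintype ι]

lemma planarNorm_le_norm (hab : a ≠ b) (x : E) : planarNorm a b x ≤ ‖x‖ := by
  classical
  rw [EuclideanSpace.norm_eq, planarNorm]
  gcongr
  simpa [Finset.sum_pair hab] using
    Finset.sum_le_univ_sum_of_nonneg (s := {a, b}) (f := fun i ↦ x i ^ 2) (fun i ↦ sq_nonneg _)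

lemma integrable_planarNorm_comp (hab : a ≠ b) {α : Type*} [MeasurableSpace α] {μ : Measure α}
    {f : α → E} (hf : Integrable f μ) : Integrable (fun x ↦ planarNorm a b (f x)) μ :=
  hf.norm.mono' (continuous_planarNorm.comp_aestronglyMeasurable hf.1) <| ae_of_all _ fun _ ↦
    (Real.norm_of_nonneg (sqrt_nonneg _)).trans_le (planarNorm_le_norm hab _)

lemma ae_apply_ne_zero (j : ι) : ∀ᵐ x : E, x j ≠ 0 := by
  have hker : LinearMap.ker (EuclideanSpace.proj j : E →L[ℝ] ℝ).toLinearMap ≠ ⊤ := by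
    classical
    rw [Ne, LinearMap.ker_eq_top]
    intro h
    simpa using congr($h (EuclideanSpace.single j 1))
  rw [ae_iff]
  convert Measure.addHaar_submodule volume _ hker
  ext x
  simp

lemma differentiable_smoothedRadialField (hδ : 0 < δ) :
    Differentiable ℝ (smoothedRadialField (ι := ι) δ a b j) := fun x ↦ by
  have := smoothedPlanarNorm_pos (a := a) (b := b) hδ x
  unfold smoothedRadialField smoothedPlanarNorm at *
  fun_prop (disch := positivity)

lemma integrable_smoothedRadialField_mul (hδ : 0 < δ) (hj : j = a ∨ j = b) {g : E → ℝ}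
    (hgi : Integrable g) : Integrable fun x ↦ smoothedRadialField δ a b j x * g x :=
  hgi.bdd_mul (continuous_smoothedRadialField hδ).aestronglyMeasurable <|
    ae_of_all _ (abs_smoothedRadialField_le_one hδ hj)

variable [DecidableEq ι]

lemma gradient_apply_euclidean (f : E → ℝ) (x : E) (j : ι) :
    ∇ f x j = fderiv ℝ f x (EuclideanSpace.single j 1) := by
  rw [← InnerProductSpace.toDual_symm_apply, EuclideanSpace.inner_single_right]
  simp [gradient]

lemma integrable_fderiv_apply_single {g : E → ℝ} (hg : Integrable (∇ g)) (j : ι) :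
    Integrable fun x ↦ fderiv ℝ g x (EuclideanSpace.single j 1) := by
  simpa [gradient_apply_euclidean] using (EuclideanSpace.proj j : E →L[ℝ] ℝ).integrable_comp hg

lemma fderiv_smoothedRadialField_apply_single (hab : a ≠ b) (hδ : 0 < δ) (hj : j = a ∨ j = b)
    (x : E) :
    fderiv ℝ (smoothedRadialField δ a b j) x (EuclideanSpace.single j 1) =
      (smoothedPlanarNorm δ a b x)⁻¹ - x j ^ 2 / smoothedPlanarNorm δ a b x ^ 3 := by
  have hq : 0 < δ + x a ^ 2 + x b ^ 2 := by positivity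
  have hs := smoothedPlanarNorm_pos (a := a) (b := b) hδ x
  have hproj := fun i ↦ PiLp.hasFDerivAt_apply (𝕜 := ℝ) 2 x i
  have h : HasFDerivAt (smoothedRadialField δ a b j) _ x :=
    (hproj j).mul ((hasDerivAt_inv hs.ne').comp_hasFDerivAt x
      ((((hasFDerivAt_const δ x).add ((hproj a).pow 2)).add ((hproj b).pow 2)).sqrt hq.ne'))
  rw [h.fderiv]
  rcases hj with rfl | rfl <;> simp [hab, hab.symm] <;> unfold smoothedPlanarNorm <;> field_simp <;>
    ring

lemma abs_fderiv_smoothedRadialField_apply_single_le (hab : a ≠ b) (hδ : 0 < δ)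
    (hj : j = a ∨ j = b) (x : E) :
    |fderiv ℝ (smoothedRadialField δ a b j) x (EuclideanSpace.single j 1)| ≤ (√δ)⁻¹ := by
  rw [fderiv_smoothedRadialField_apply_single hab hδ hj]
  have hs := smoothedPlanarNorm_pos (a := a) (b := b) hδ x
  have h0 : 0 ≤ x j ^ 2 / smoothedPlanarNorm δ a b x ^ 3 := by positivity
  have h1 : x j ^ 2 / smoothedPlanarNorm δ a b x ^ 3 ≤ (smoothedPlanarNorm δ a b x)⁻¹ := by
    rw [div_le_iff₀ (by positivity), ← sq_abs]
    calc |x j| ^ 2 ≤ smoothedPlanarNorm δ a b x ^ 2 := by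
          gcongr; exact abs_apply_le_smoothedPlanarNorm hδ.le hj x
      _ = _ := by field_simp
  rw [abs_of_nonneg (by linarith)]
  linarith [inv_smoothedPlanarNorm_le (a := a) (b := b) hδ x]

lemma inv_smoothedPlanarNorm_le_divergence (hab : a ≠ b) (hδ : 0 < δ) (x : E) :
    (smoothedPlanarNorm δ a b x)⁻¹ ≤
      fderiv ℝ (smoothedRadialField δ a b a) x (EuclideanSpace.single a 1) +
      fderiv ℝ (smoothedRadialField δ a b b) x (EuclideanSpace.single b 1) := by
  rw [fderiv_smoothedRadialField_apply_single hab hδ (.inl rfl),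
    fderiv_smoothedRadialField_apply_single hab hδ (.inr rfl)]
  have hs := smoothedPlanarNorm_pos (a := a) (b := b) hδ x
  have hsq := smoothedPlanarNorm_sq (a := a) (b := b) hδ.le x
  -- the divergence is `(2δ + x a ^ 2 + x b ^ 2) / s ^ 3 ≥ s ^ 2 / s ^ 3`
  have : x a ^ 2 / smoothedPlanarNorm δ a b x ^ 3 + x b ^ 2 / smoothedPlanarNorm δ a b x ^ 3 ≤
      (smoothedPlanarNorm δ a b x)⁻¹ := by
    rw [← add_div, div_le_iff₀ (by positivity)]
    field_simp
    linarith
  linarith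

lemma integrable_fderiv_smoothedRadialField_mul (hab : a ≠ b) (hδ : 0 < δ) (hj : j = a ∨ j = b)
    {g : E → ℝ} (hgi : Integrable g) :
    Integrable fun x ↦ fderiv ℝ (smoothedRadialField δ a b j) x (EuclideanSpace.single j 1) * g x :=
  hgi.bdd_mul (measurable_fderiv_apply_const ℝ _ _).aestronglyMeasurable <|
    ae_of_all _ (abs_fderiv_smoothedRadialField_apply_single_le hab hδ hj)

lemma integral_fderiv_smoothedRadialField_mul (hab : a ≠ b) (hδ : 0 < δ) (hj : j = a ∨ j = b)
    {g : E → ℝ} (hg : Differentiable ℝ g) (hgi : Integrable g) (hg'i : Integrable (∇ g)) :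
    ∫ x, fderiv ℝ (smoothedRadialField δ a b j) x (EuclideanSpace.single j 1) * g x =
      -∫ x, smoothedRadialField δ a b j x * fderiv ℝ g x (EuclideanSpace.single j 1) := by
  rw [integral_mul_fderiv_eq_neg_fderiv_mul_of_integrable
    (integrable_fderiv_smoothedRadialField_mul hab hδ hj hgi)
    (integrable_smoothedRadialField_mul hδ hj (integrable_fderiv_apply_single hg'i j))
    (integrable_smoothedRadialField_mul hδ hj hgi)
    (fun x _ ↦ differentiable_smoothedRadialField hδ x) (fun x _ ↦ hg x), neg_neg]

lemma integral_inv_smoothedPlanarNorm_mul_le (hab : a ≠ b) (hδ : 0 < δ) {g : E → ℝ}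
    (hg : Differentiable ℝ g) (hg0 : ∀ x, 0 ≤ g x) (hgi : Integrable g)
    (hg'i : Integrable (∇ g)) :
    ∫ x, (smoothedPlanarNorm δ a b x)⁻¹ * g x ≤ ∫ x, planarNorm a b (∇ g x) := by
  set F := smoothedRadialField δ a b
  set e : ι → E := fun j ↦ EuclideanSpace.single j 1
  have ha : a = a ∨ a = b := .inl rfl
  have hb : b = a ∨ b = b := .inr rfl
  have hF'g := fun j (hj : j = a ∨ j = b) ↦ integrable_fderiv_smoothedRadialField_mul hab hδ hj hgi
  have hFg' := fun j (hj : j = a ∨ j = b) ↦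
    integrable_smoothedRadialField_mul hδ hj (integrable_fderiv_apply_single hg'i j)
  calc ∫ x, (smoothedPlanarNorm δ a b x)⁻¹ * g x
      ≤ ∫ x, (fderiv ℝ (F a) x (e a) * g x + fderiv ℝ (F b) x (e b) * g x) := by
        refine integral_mono_of_nonneg
          (ae_of_all _ fun x ↦ mul_nonneg (inv_nonneg.2 (sqrt_nonneg _)) (hg0 x))
          ((hF'g a ha).add (hF'g b hb)) (ae_of_all _ fun x ↦ ?_)
        dsimp only
        rw [← add_mul]
        exact mul_le_mul_of_nonneg_right (inv_smoothedPlanarNorm_le_divergence hab hδ x) (hg0 x)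
    _ = ∫ x, -(F a x * fderiv ℝ g x (e a) + F b x * fderiv ℝ g x (e b)) := by
        rw [integral_add (hF'g a ha) (hF'g b hb),
          integral_fderiv_smoothedRadialField_mul hab hδ ha hg hgi hg'i,
          integral_fderiv_smoothedRadialField_mul hab hδ hb hg hgi hg'i, integral_neg,
          integral_add (hFg' a ha) (hFg' b hb)]
        ring
    _ ≤ ∫ x, planarNorm a b (∇ g x) := by
        refine integral_mono ((hFg' a ha).add (hFg' b hb)).neg
          (integrable_planarNorm_comp hab hg'i) fun x ↦ ?_
        rw [planarNorm, gradient_apply_euclidean, gradient_apply_euclidean]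
        exact (neg_le_abs _).trans
          (abs_mul_add_mul_le_sqrt (smoothedRadialField_sq_add_sq_le_one hδ x))

theorem integrable_inv_planarNorm_mul_and_integral_le (hab : a ≠ b) {g : E → ℝ}
    (hg : Differentiable ℝ g) (hg0 : ∀ x, 0 ≤ g x) (hgi : Integrable g)
    (hg'i : Integrable (∇ g)) :
    Integrable (fun x ↦ (planarNorm a b x)⁻¹ * g x) ∧
      ∫ x, (planarNorm a b x)⁻¹ * g x ≤ ∫ x, planarNorm a b (∇ g x) := by
  have hδ : ∀ n : ℕ, (0 : ℝ) < 1 / (n + 1) := fun n ↦ by positivity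
  refine integrable_and_integral_le_of_tendsto
    (fun n x ↦ mul_nonneg (inv_nonneg.2 (sqrt_nonneg _)) (hg0 x)) (fun n ↦ ?_)
    (fun n ↦ integral_inv_smoothedPlanarNorm_mul_le hab (hδ n) hg hg0 hgi hg'i) ?_
  · refine hgi.bdd_mul (c := (√(1 / (n + 1)))⁻¹) (continuous_smoothedPlanarNorm.inv₀
      fun x ↦ (smoothedPlanarNorm_pos (hδ n) x).ne').aestronglyMeasurable (ae_of_all _ fun x ↦ ?_)
    rw [norm_inv, Real.norm_of_nonneg (sqrt_nonneg _)]
    exact inv_smoothedPlanarNorm_le (hδ n) x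
  · filter_upwards [ae_apply_ne_zero a] with x hx
    have hρ : planarNorm a b x ≠ 0 := (sqrt_pos.2 (by positivity)).ne'
    exact ((tendsto_smoothedPlanarNorm x).inv₀ hρ).mul_const _

end Planar

namespace SchwartzMap

variable {E F : Type*} [NormedAddCommGroup E] [NormedAddCommGroup F]

lemma norm_gradient_norm_sq_le [InnerProductSpace ℝ E] [CompleteSpace E] [InnerProductSpace ℝ F]
    (ψ : 𝓢(E, F)) (x : E) :
    ‖∇ (fun y ↦ ‖ψ y‖ ^ 2) x‖ ≤ 2 * (‖ψ x‖ * ‖fderiv ℝ ψ x‖) := by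
  rw [gradient, LinearIsometryEquiv.norm_map, (ψ.differentiableAt.hasFDerivAt.norm_sq).fderiv,
    ← innerSL_apply_norm ℝ (ψ x)]
  refine norm_nsmul_le.trans ?_
  push_cast
  gcongr
  exact ContinuousLinearMap.opNorm_comp_le _ _

variable [InnerProductSpace ℝ E] [FiniteDimensional ℝ E] [MeasurableSpace E] [BorelSpace E]
  {μ : Measure E} [μ.HasTemperateGrowth]

section NormedSpace

variable [NormedSpace ℝ F] (ψ : 𝓢(E, F))

lemma integrable_norm_sq : Integrable (fun x ↦ ‖ψ x‖ ^ 2) μ :=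
  (ψ.memLp 2 μ).integrable_norm_pow two_ne_zero

lemma memLp_norm_fderiv (p : ENNReal) : MemLp (fun x ↦ ‖fderiv ℝ ψ x‖) p μ := by
  simpa using ((fderivCLM ℝ E F ψ).memLp p μ).norm

lemma integral_norm_mul_norm_fderiv_le :
    ∫ x, ‖ψ x‖ * ‖fderiv ℝ ψ x‖ ∂μ ≤
      √(∫ x, ‖ψ x‖ ^ 2 ∂μ) * √(∫ x, ‖fderiv ℝ ψ x‖ ^ 2 ∂μ) :=
  integral_mul_le_sqrt_integral_sq_mul_sqrt (ae_of_all _ fun _ ↦ norm_nonneg _)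
    (ae_of_all _ fun _ ↦ norm_nonneg _) (ψ.memLp 2 μ).norm (ψ.memLp_norm_fderiv 2)

lemma integrable_norm_mul_norm_fderiv : Integrable (fun x ↦ ‖ψ x‖ * ‖fderiv ℝ ψ x‖) μ :=
  (ψ.memLp 2 μ).norm.integrable_mul (ψ.memLp_norm_fderiv 2)

end NormedSpace

variable [InnerProductSpace ℝ F] (ψ : 𝓢(E, F))

lemma integrable_gradient_norm_sq : Integrable (∇ fun x ↦ ‖ψ x‖ ^ 2) μ := by
  refine (ψ.integrable_norm_mul_norm_fderiv.const_mul 2).mono' ?_ (ae_of_all _ fun x ↦ ?_)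
  · exact ((InnerProductSpace.toDual ℝ E).symm.continuous.comp
      (((ψ.smooth ⊤).norm_sq ℝ).continuous_fderiv (by simp))).aestronglyMeasurable
  · exact ψ.norm_gradient_norm_sq_le x

end SchwartzMap

lemma sum_planarNorm_le {κ : Type*} [Fintype κ] (v : EuclideanSpace ℝ (κ × Fin 2)) :
    ∑ i, planarNorm (i, 0) (i, 1) v ≤ √(Fintype.card κ) * ‖v‖ := by
  have h := sum_sqrt_mul_sqrt_le Finset.univ (fun _ ↦ zero_le_one)
    (fun i : κ ↦ add_nonneg (sq_nonneg (v (i, 0))) (sq_nonneg (v (i, 1))))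
  simp only [sqrt_one, one_mul, Finset.sum_const, Finset.card_univ, nsmul_eq_mul, mul_one] at h
  refine h.trans_eq ?_
  rw [EuclideanSpace.norm_eq, Fintype.sum_prod_type]
  simp [Fin.sum_univ_two]

lemma sum_integral_inv_planarNorm_mul_norm_sq_le {κ F : Type*} [Fintype κ]
    [NormedAddCommGroup F] [InnerProductSpace ℝ F] (ψ : 𝓢(EuclideanSpace ℝ (κ × Fin 2), F)) :
    ∑ i, ∫ x, (planarNorm (i, 0) (i, 1) x)⁻¹ * ‖ψ x‖ ^ 2 ≤
      2 * √(Fintype.card κ) * (√(∫ x, ‖ψ x‖ ^ 2) * √(∫ x, ‖fderiv ℝ ψ x‖ ^ 2)) := by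
  classical
  set g := fun x ↦ ‖ψ x‖ ^ 2
  have hardy := fun i : κ ↦ integrable_inv_planarNorm_mul_and_integral_le
    (a := (i, 0)) (b := (i, 1)) (by simp) (ψ.differentiable.norm_sq ℝ)
    (fun x ↦ sq_nonneg ‖ψ x‖) ψ.integrable_norm_sq ψ.integrable_gradient_norm_sq
  have hint := fun i : κ ↦ integrable_planarNorm_comp (a := (i, 0)) (b := (i, 1)) (by simp)
    (ψ.integrable_gradient_norm_sq (μ := volume))
  calc ∑ i, ∫ x, (planarNorm (i, 0) (i, 1) x)⁻¹ * g x
      ≤ ∑ i, ∫ x, planarNorm (i, 0) (i, 1) (∇ g x) := Finset.sum_le_sum fun i _ ↦ (hardy i).2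
    _ = ∫ x, ∑ i, planarNorm (i, 0) (i, 1) (∇ g x) :=
        (integral_finsetSum _ fun i _ ↦ hint i).symm
    _ ≤ ∫ x, 2 * √(Fintype.card κ) * (‖ψ x‖ * ‖fderiv ℝ ψ x‖) := by
        refine integral_mono (integrable_finsetSum _ fun i _ ↦ hint i)
          (ψ.integrable_norm_mul_norm_fderiv.const_mul _) fun x ↦ ?_
        calc _ ≤ √(Fintype.card κ) * ‖∇ g x‖ := sum_planarNorm_le _
          _ ≤ √(Fintype.card κ) * (2 * (‖ψ x‖ * ‖fderiv ℝ ψ x‖)) := by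
              gcongr; exact ψ.norm_gradient_norm_sq_le x
          _ = _ := by ring
    _ ≤ _ := by
        rw [integral_const_mul]
        gcongr
        exact ψ.integral_norm_mul_norm_fderiv_le

lemma neg_abs_mul_sum_inv_planarNorm_le_V2D (N : ℕ) (Z : ℝ)
    (x : EuclideanSpace ℝ (Fin N × Fin 2)) :
    -|Z| * ∑ i, (planarNorm (i, 0) (i, 1) x)⁻¹ ≤ V2D N Z x := by
  have hattr : 0 ≤ ∑ i, (planarNorm (i, 0) (i, 1) x)⁻¹ :=
    Finset.sum_nonneg fun i _ ↦ inv_nonneg.2 (sqrt_nonneg _)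
  have hrep : 0 ≤ ∑ p ∈ Finset.univ.filter (fun p : Fin N × Fin N ↦ p.1 < p.2),
      (√((x (p.1, 0) - x (p.2, 0)) ^ 2 + (x (p.1, 1) - x (p.2, 1)) ^ 2))⁻¹ :=
    Finset.sum_nonneg fun p _ ↦ inv_nonneg.2 (sqrt_nonneg _)
  rw [V2D]
  unfold planarNorm at hattr ⊢
  nlinarith [mul_le_mul_of_nonneg_right (le_abs_self Z) hattr]

lemma neg_mul_le_integral_V2D_mul_norm_sq (N : ℕ) (Z : ℝ)
    (ψ : 𝓢(EuclideanSpace ℝ (Fin N × Fin 2), ℂ)) :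
    -(2 * |Z| * √N) * (√(∫ x, ‖ψ x‖ ^ 2) * √(∫ x, ‖fderiv ℝ ψ x‖ ^ 2)) ≤
      ∫ x, V2D N Z x * ‖ψ x‖ ^ 2 := by
  by_cases hV : Integrable fun x ↦ V2D N Z x * ‖ψ x‖ ^ 2
  swap
  · rw [integral_undef hV, neg_mul]
    exact neg_nonpos.2 (by positivity)
  have hint := fun i : Fin N ↦ (integrable_inv_planarNorm_mul_and_integral_le
    (a := (i, 0)) (b := (i, 1)) (by simp) (ψ.differentiable.norm_sq ℝ)
    (fun x ↦ sq_nonneg ‖ψ x‖) ψ.integrable_norm_sq ψ.integrable_gradient_norm_sq).1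
  have hsum := sum_integral_inv_planarNorm_mul_norm_sq_le ψ
  rw [Fintype.card_fin] at hsum
  calc _ ≤ -|Z| * ∑ i, ∫ x, (planarNorm (i, 0) (i, 1) x)⁻¹ * ‖ψ x‖ ^ 2 := by
        nlinarith [abs_nonneg Z]
    _ = ∫ x, -|Z| * ∑ i, (planarNorm (i, 0) (i, 1) x)⁻¹ * ‖ψ x‖ ^ 2 := by
        rw [integral_const_mul, integral_finsetSum _ fun i _ ↦ hint i]
    _ ≤ ∫ x, V2D N Z x * ‖ψ x‖ ^ 2 := by
        refine integral_mono ((integrable_finsetSum _ fun i _ ↦ hint i).const_mul _) hV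
          fun x ↦ ?_
        rw [← Finset.sum_mul, ← mul_assoc]
        exact mul_le_mul_of_nonneg_right (neg_abs_mul_sum_inv_planarNorm_le_V2D N Z x)
          (sq_nonneg _)

theorem numerical_range_lower_bound_general (N : ℕ) (Z : ℝ)
    (ψ : SchwartzMap (EuclideanSpace ℝ (Fin N × Fin 2)) ℂ)
    (hψ : ∫ x : EuclideanSpace ℝ (Fin N × Fin 2), ‖ψ x‖ ^ 2 = 1) :
    -((Real.Gamma (1 / 4)) ^ 4 * Real.sqrt N * Z / (8 * π ^ 2)) ^ 2 ≤
      (∫ x : EuclideanSpace ℝ (Fin N × Fin 2), ‖fderiv ℝ (⇑ψ) x‖ ^ 2) +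
        ∫ x : EuclideanSpace ℝ (Fin N × Fin 2), V2D N Z x * ‖ψ x‖ ^ 2 := by
  have hV := neg_mul_le_integral_V2D_mul_norm_sq N Z ψ
  rw [hψ, sqrt_one, one_mul] at hV
  set T := ∫ x, ‖fderiv ℝ ψ x‖ ^ 2
  have hT : √T ^ 2 = T := sq_sqrt (integral_nonneg fun _ ↦ sq_nonneg _)
  have hK : 1 ≤ Gamma (1 / 4) ^ 4 / (8 * π ^ 2) := by
    rw [one_le_div (by positivity)]
    exact eight_mul_pi_sq_le_Gamma_one_fourth_pow_four
  have hc : (√N * Z) ^ 2 ≤ (Gamma (1 / 4) ^ 4 * √N * Z / (8 * π ^ 2)) ^ 2 := by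
    rw [show (Gamma (1 / 4) ^ 4 * √N * Z / (8 * π ^ 2)) ^ 2 =
      (Gamma (1 / 4) ^ 4 / (8 * π ^ 2)) ^ 2 * (√N * Z) ^ 2 by ring]
    exact le_mul_of_one_le_left (sq_nonneg _) (one_le_pow₀ hK)
  have hquad : (√T - |Z| * √N) ^ 2 = T - 2 * |Z| * √N * √T + (√N * Z) ^ 2 := by
    linear_combination hT + √N ^ 2 * sq_abs Z
  nlinarith [sq_nonneg (√T - |Z| * √N)]

/-- The bottom of the numerical range of the two-dimensional atomic Hamiltonian
`h_{N,Z} = -Δ + 𝒱_{2D}` is bounded below by `-(Γ(1/4)⁴ √N Z / (8π²))²`: for every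
normalized `ψ ∈ H¹(ℝ^{2N})` (here Schwartz),
`‖∇ψ‖² + ⟨ψ, 𝒱_{2D} ψ⟩ ≥ -(Γ(1/4)⁴ √N Z / (8π²))²`. -/
theorem numerical_range_lower_bound (N : ℕ) (Z : ℝ) (hZ : 0 < Z)
    (ψ : SchwartzMap (EuclideanSpace ℝ (Fin N × Fin 2)) ℂ)
    (hψ : ∫ x : EuclideanSpace ℝ (Fin N × Fin 2), ‖ψ x‖ ^ 2 = 1) :
    -((Real.Gamma (1 / 4)) ^ 4 * Real.sqrt N * Z / (8 * π ^ 2)) ^ 2 ≤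
      (∫ x : EuclideanSpace ℝ (Fin N × Fin 2), ‖fderiv ℝ (⇑ψ) x‖ ^ 2) +
        ∫ x : EuclideanSpace ℝ (Fin N × Fin 2), V2D N Z x * ‖ψ x‖ ^ 2 :=
  numerical_range_lower_bound_general N Z ψ hψ
end

section
/- The function W_ee(ϱ) := 1 − ϱ V_ee^1(ϱ), ϱ > 0, satisfies 0 ≤ W_ee ≤ 1 and ∫_0^∞ W_ee(ϱ) dϱ = 1/3 − 5/(4π²). -/
/-!
`weeKernel ϱ c = 1 - ϱ / √(ϱ² + c²)` lies in `[0, 1]` for `ϱ ≥ 0` and is the derivative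
of `ϱ ↦ ϱ - √(ϱ² + c²)`, which increases from `-|c|` to `0`; hence
`∫₀^∞ weeKernel ϱ c dϱ = |c|`. Since `∫∫ cos²(πs) cos²(πt) = 1/4` over the square,
`1 - ϱ V_ee^1(ϱ)` equals `4 ∫∫ cos²(πs) cos²(πt) weeKernel ϱ (s - t)`, which gives the bounds,
and Fubini turns `∫₀^∞ W_ee` into `4 ∫∫ cos²(πs) cos²(πt) |s - t| ds dt`, an elementary integral.
-/

open Real MeasureTheory intervalIntegral

/-- The effective electron–electron potential at width `1`:
`V_ee^1(ϱ) = 4 ∫_{-1/2}^{1/2} ∫_{-1/2}^{1/2} cos²(πs) cos²(πt) / √(ϱ² + (s-t)²) ds dt`. -/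
noncomputable def Vee1 (ϱ : ℝ) : ℝ :=
  4 * ∫ s in (-(1 / 2 : ℝ))..(1 / 2 : ℝ), ∫ t in (-(1 / 2 : ℝ))..(1 / 2 : ℝ),
    Real.cos (π * s) ^ 2 * Real.cos (π * t) ^ 2 / Real.sqrt (ϱ ^ 2 + (s - t) ^ 2)

open Set Filter Topology

noncomputable def weeKernel (ϱ c : ℝ) : ℝ := 1 - ϱ / √(ϱ ^ 2 + c ^ 2)

section weeKernel

variable {ϱ : ℝ} (c : ℝ)

lemma le_sqrt_sq_add_sq : ϱ ≤ √(ϱ ^ 2 + c ^ 2) :=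
  le_sqrt_of_sq_le (le_add_of_nonneg_right (sq_nonneg c))

lemma weeKernel_nonneg : 0 ≤ weeKernel ϱ c :=
  sub_nonneg.2 (div_le_one_of_le₀ (le_sqrt_sq_add_sq c) (sqrt_nonneg _))

lemma weeKernel_le_one (hϱ : 0 ≤ ϱ) : weeKernel ϱ c ≤ 1 :=
  sub_le_self _ (div_nonneg hϱ (sqrt_nonneg _))

lemma hasDerivAt_sub_sqrt_sq_add_sq (hϱ : ϱ ≠ 0) :
    HasDerivAt (fun x ↦ x - √(x ^ 2 + c ^ 2)) (weeKernel ϱ c) ϱ := by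
  have hpos : 0 < ϱ ^ 2 + c ^ 2 := by positivity
  have h := (hasDerivAt_id ϱ).sub (((hasDerivAt_pow 2 ϱ).add_const (c ^ 2)).sqrt hpos.ne')
  refine h.congr_deriv ?_
  unfold weeKernel
  field_simp
  ring

lemma tendsto_sub_sqrt_sq_add_sq :
    Tendsto (fun x ↦ x - √(x ^ 2 + c ^ 2)) atTop (𝓝 0) := by
  -- rationalise: `x - √(x² + c²) = -c² / (x + √(x² + c²))`
  have hden : Tendsto (fun x ↦ x + √(x ^ 2 + c ^ 2)) atTop atTop :=
    tendsto_id.atTop_add_nonneg fun _ ↦ sqrt_nonneg _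
  have hlim := (tendsto_const_nhds (x := -c ^ 2)).div_atTop hden
  refine hlim.congr' ?_
  filter_upwards [eventually_gt_atTop 0] with x hx
  have hr : √(x ^ 2 + c ^ 2) ^ 2 = x ^ 2 + c ^ 2 := sq_sqrt (by positivity)
  have hd : 0 < x + √(x ^ 2 + c ^ 2) := by positivity
  field_simp
  linear_combination hr

variable {c}

lemma integral_weeKernel_Ioi : ∫ ϱ in Ioi 0, weeKernel ϱ c = |c| := by
  have h := integral_Ioi_of_hasDerivAt_of_nonneg (by fun_prop)
    (fun x hx ↦ hasDerivAt_sub_sqrt_sq_add_sq c (ne_of_gt hx))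
    (fun _ _ ↦ weeKernel_nonneg c) (tendsto_sub_sqrt_sq_add_sq c)
  simpa [sqrt_sq_eq_abs] using h

lemma integrableOn_weeKernel_Ioi : IntegrableOn (weeKernel · c) (Ioi 0) :=
  integrableOn_Ioi_deriv_of_nonneg (by fun_prop)
    (fun x hx ↦ hasDerivAt_sub_sqrt_sq_add_sq c (ne_of_gt hx))
    (fun _ _ ↦ weeKernel_nonneg c) (tendsto_sub_sqrt_sq_add_sq c)

end weeKernel

lemma integral_cos_pi_mul_sq : ∫ t in (-(1 / 2 : ℝ))..(1 / 2), cos (π * t) ^ 2 = 1 / 2 := by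
  rw [integral_comp_mul_left (fun x ↦ cos x ^ 2) pi_ne_zero, integral_cos_sq]
  have e : π * (1 / 2) = π / 2 := by ring
  simp only [e, mul_neg, cos_neg, sin_neg, cos_pi_div_two, smul_eq_mul]
  field_simp
  ring

lemma hasDerivAt_cos_sq_mul_sub (s t : ℝ) :
    HasDerivAt (fun t ↦ (s * t - t ^ 2 / 2) / 2 + (s - t) * sin (2 * π * t) / (4 * π)
      - cos (2 * π * t) / (8 * π ^ 2)) (cos (π * t) ^ 2 * (s - t)) t := by
  have hlin := (hasDerivAt_id' t).const_mul (2 * π)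
  have h := (((hasDerivAt_id' t).const_mul s).sub ((hasDerivAt_pow 2 t).div_const 2)).div_const 2
    |>.add ((((hasDerivAt_id' t).const_sub s).mul hlin.sin).div_const (4 * π))
    |>.sub (hlin.cos.div_const (8 * π ^ 2))
  refine h.congr_deriv ?_
  rw [cos_sq, show 2 * (π * t) = 2 * π * t by ring]
  field_simp
  ring

lemma integral_cos_sq_mul_abs_sub {s : ℝ} (hs : s ∈ Icc (-(1 / 2 : ℝ)) (1 / 2)) :
    ∫ t in (-(1 / 2 : ℝ))..(1 / 2), cos (π * t) ^ 2 * |s - t|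
      = s ^ 2 / 2 + 1 / 8 - (1 + cos (2 * π * s)) / (4 * π ^ 2) := by
  have hcont : Continuous fun t ↦ cos (π * t) ^ 2 * |s - t| := by fun_prop
  rw [← integral_add_adjacent_intervals (hcont.intervalIntegrable _ s)
    (hcont.intervalIntegrable s _)]
  have hleft : ∫ t in (-(1 / 2 : ℝ))..s, cos (π * t) ^ 2 * |s - t|
      = ∫ t in (-(1 / 2 : ℝ))..s, cos (π * t) ^ 2 * (s - t) :=
    integral_congr fun t ht ↦ by
      rw [uIcc_of_le hs.1] at ht
      simp only [abs_of_nonneg (sub_nonneg.2 ht.2)]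
  have hright : ∫ t in s..(1 / 2 : ℝ), cos (π * t) ^ 2 * |s - t|
      = -∫ t in s..(1 / 2 : ℝ), cos (π * t) ^ 2 * (s - t) := by
    rw [← intervalIntegral.integral_neg]
    refine integral_congr fun t ht ↦ ?_
    rw [uIcc_of_le hs.2] at ht
    simp only [abs_of_nonpos (sub_nonpos.2 ht.1)]
    ring
  have hftc : ∀ a b, ∫ t in a..b, cos (π * t) ^ 2 * (s - t) = _ := fun a b ↦
    integral_eq_sub_of_hasDerivAt (fun t _ ↦ hasDerivAt_cos_sq_mul_sub s t)
      ((by fun_prop : Continuous _).intervalIntegrable a b)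
  rw [hleft, hright, hftc, hftc]
  have e₁ : 2 * π * (1 / 2) = π := by ring
  have e₂ : 2 * π * (-(1 / 2)) = -π := by ring
  simp only [e₁, e₂, sin_pi, cos_pi, sin_neg, cos_neg]
  field_simp
  ring

lemma integral_cos_sq_mul_integral_cos_sq_mul_abs_sub :
    ∫ s in (-(1 / 2 : ℝ))..(1 / 2), cos (π * s) ^ 2 *
      ∫ t in (-(1 / 2 : ℝ))..(1 / 2), cos (π * t) ^ 2 * |s - t|
      = 1 / 12 - 5 / (16 * π ^ 2) := by
  have hderiv : ∀ s : ℝ, HasDerivAt (fun s ↦ s ^ 3 / 12 + (1 / 16 - 3 / (16 * π ^ 2)) * s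
      + s ^ 2 * sin (2 * π * s) / (8 * π) + s * cos (2 * π * s) / (8 * π ^ 2)
      - sin (2 * π * s) / (16 * π ^ 3) + (1 / 16 - 1 / (4 * π ^ 2)) * sin (2 * π * s) / (2 * π)
      - sin (4 * π * s) / (64 * π ^ 3))
      (cos (π * s) ^ 2 * (s ^ 2 / 2 + 1 / 8 - (1 + cos (2 * π * s)) / (4 * π ^ 2))) s := by
    intro s
    have h₂ := (hasDerivAt_id' s).const_mul (2 * π)
    have h₄ := (hasDerivAt_id' s).const_mul (4 * π)
    have h := ((hasDerivAt_pow 3 s).div_const 12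
      |>.add ((hasDerivAt_id' s).const_mul (1 / 16 - 3 / (16 * π ^ 2)))
      |>.add (((hasDerivAt_pow 2 s).mul h₂.sin).div_const (8 * π))
      |>.add (((hasDerivAt_id' s).mul h₂.cos).div_const (8 * π ^ 2))
      |>.sub (h₂.sin.div_const (16 * π ^ 3))
      |>.add ((h₂.sin.const_mul (1 / 16 - 1 / (4 * π ^ 2))).div_const (2 * π))
      |>.sub (h₄.sin.div_const (64 * π ^ 3)))
    refine h.congr_deriv ?_
    rw [cos_sq (π * s), show 2 * (π * s) = 2 * π * s by ring,
      show 4 * π * s = 2 * (2 * π * s) by ring, cos_two_mul]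
    field_simp
    ring
  have hinner : EqOn (fun s ↦ cos (π * s) ^ 2 *
      ∫ t in (-(1 / 2 : ℝ))..(1 / 2), cos (π * t) ^ 2 * |s - t|)
      (fun s ↦ cos (π * s) ^ 2 * (s ^ 2 / 2 + 1 / 8 - (1 + cos (2 * π * s)) / (4 * π ^ 2)))
      (uIcc (-(1 / 2)) (1 / 2)) := fun s hs ↦ by
    rw [uIcc_of_le (by norm_num)] at hs
    simp only [integral_cos_sq_mul_abs_sub hs]
  rw [integral_congr hinner, integral_eq_sub_of_hasDerivAt (fun s _ ↦ hderiv s)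
    ((by fun_prop : Continuous _).intervalIntegrable _ _)]
  have e₁ : 2 * π * (1 / 2) = π := by ring
  have e₂ : 2 * π * (-(1 / 2)) = -π := by ring
  have e₃ : 4 * π * (1 / 2) = 2 * π := by ring
  have e₄ : 4 * π * (-(1 / 2)) = -(2 * π) := by ring
  simp only [e₁, e₂, e₃, e₄, sin_pi, cos_pi, sin_two_pi, sin_neg, cos_neg]
  field_simp
  ring

lemma intervalIntegral_intervalIntegral_eq_setIntegral_prod {E : Type*} [NormedAddCommGroup E]
    [NormedSpace ℝ E] {a b c d : ℝ} (hab : a ≤ b) (hcd : c ≤ d) {f : ℝ × ℝ → E}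
    (hf : IntegrableOn f (Ioc a b ×ˢ Ioc c d)) :
    ∫ s in a..b, ∫ t in c..d, f (s, t) = ∫ p in Ioc a b ×ˢ Ioc c d, f p := by
  simp_rw [integral_of_le hab, integral_of_le hcd]
  rw [Measure.volume_eq_prod, setIntegral_prod f hf]

lemma Continuous.integrableOn_Ioc_prod_Ioc {E : Type*} [NormedAddCommGroup E] {f : ℝ × ℝ → E}
    (hf : Continuous f) (a b c d : ℝ) : IntegrableOn f (Ioc a b ×ˢ Ioc c d) :=
  (hf.continuousOn.integrableOn_compact (isCompact_Icc.prod isCompact_Icc)).mono_set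
    (prod_mono Ioc_subset_Icc_self Ioc_subset_Icc_self)

-- `×ˢ` is not accepted in a notation body, hence the explicit `SProd.sprod`.
local notation "Q" =>
  SProd.sprod (Ioc (-(1 / 2 : ℝ)) (1 / 2 : ℝ)) (Ioc (-(1 / 2 : ℝ)) (1 / 2 : ℝ))

noncomputable def pairDensity (p : ℝ × ℝ) : ℝ := cos (π * p.1) ^ 2 * cos (π * p.2) ^ 2

lemma pairDensity_nonneg (p : ℝ × ℝ) : 0 ≤ pairDensity p := by
  unfold pairDensity
  positivity

lemma continuous_pairDensity : Continuous pairDensity := by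
  unfold pairDensity
  fun_prop

lemma setIntegral_pairDensity : ∫ p in Q, pairDensity p = 1 / 4 := by
  rw [← intervalIntegral_intervalIntegral_eq_setIntegral_prod (by norm_num) (by norm_num)
    (continuous_pairDensity.integrableOn_Ioc_prod_Ioc _ _ _ _)]
  simp only [pairDensity, intervalIntegral.integral_const_mul, intervalIntegral.integral_mul_const,
    integral_cos_pi_mul_sq]
  norm_num

lemma continuous_pairDensity_div_sqrt {ϱ : ℝ} (hϱ : ϱ ≠ 0) :
    Continuous fun p : ℝ × ℝ ↦ pairDensity p / √(ϱ ^ 2 + (p.1 - p.2) ^ 2) :=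
  continuous_pairDensity.div (by fun_prop) fun p ↦ by positivity

lemma Vee1_eq_setIntegral {ϱ : ℝ} (hϱ : ϱ ≠ 0) :
    Vee1 ϱ = 4 * ∫ p in Q, pairDensity p / √(ϱ ^ 2 + (p.1 - p.2) ^ 2) := by
  rw [← intervalIntegral_intervalIntegral_eq_setIntegral_prod (by norm_num) (by norm_num)
    ((continuous_pairDensity_div_sqrt hϱ).integrableOn_Ioc_prod_Ioc _ _ _ _)]
  rfl

lemma continuous_pairDensity_mul_weeKernel {ϱ : ℝ} (hϱ : ϱ ≠ 0) :
    Continuous fun p : ℝ × ℝ ↦ pairDensity p * weeKernel ϱ (p.1 - p.2) := by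
  refine continuous_pairDensity.mul (continuous_const.sub ?_)
  exact continuous_const.div (by fun_prop) fun p ↦ by positivity

lemma one_sub_mul_Vee1 {ϱ : ℝ} (hϱ : ϱ ≠ 0) :
    1 - ϱ * Vee1 ϱ = 4 * ∫ p in Q, pairDensity p * weeKernel ϱ (p.1 - p.2) := by
  have hsplit : ∀ p : ℝ × ℝ, pairDensity p * weeKernel ϱ (p.1 - p.2)
      = pairDensity p - ϱ * (pairDensity p / √(ϱ ^ 2 + (p.1 - p.2) ^ 2)) := fun p ↦ by
    unfold weeKernel
    ring
  simp_rw [hsplit]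
  rw [MeasureTheory.integral_sub (continuous_pairDensity.integrableOn_Ioc_prod_Ioc _ _ _ _)
    (((continuous_pairDensity_div_sqrt hϱ).integrableOn_Ioc_prod_Ioc _ _ _ _).const_mul ϱ),
    MeasureTheory.integral_const_mul,
    setIntegral_pairDensity, Vee1_eq_setIntegral hϱ]
  ring

lemma setIntegral_pairDensity_mul_weeKernel_mem_Icc {ϱ : ℝ} (hϱ : 0 < ϱ) :
    ∫ p in Q, pairDensity p * weeKernel ϱ (p.1 - p.2) ∈ Icc 0 (1 / 4) := by
  refine ⟨MeasureTheory.integral_nonneg fun p ↦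
    mul_nonneg (pairDensity_nonneg p) (weeKernel_nonneg _), ?_⟩
  rw [← setIntegral_pairDensity]
  exact MeasureTheory.integral_mono
    ((continuous_pairDensity_mul_weeKernel hϱ.ne').integrableOn_Ioc_prod_Ioc _ _ _ _)
    (continuous_pairDensity.integrableOn_Ioc_prod_Ioc _ _ _ _)
    fun p ↦ mul_le_of_le_one_right (pairDensity_nonneg p) (weeKernel_le_one _ hϱ.le)

lemma continuous_pairDensity_mul_abs_sub :
    Continuous fun p : ℝ × ℝ ↦ pairDensity p * |p.1 - p.2| :=
  continuous_pairDensity.mul (by fun_prop)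

lemma integrable_pairDensity_mul_weeKernel :
    Integrable
      (Function.uncurry fun ϱ (p : ℝ × ℝ) ↦ pairDensity p * weeKernel ϱ (p.1 - p.2))
      ((volume.restrict (Ioi 0)).prod (volume.restrict Q)) := by
  have hmeas : Measurable (Function.uncurry fun ϱ (p : ℝ × ℝ) ↦
      pairDensity p * weeKernel ϱ (p.1 - p.2)) := by
    unfold pairDensity weeKernel Function.uncurry
    fun_prop
  rw [integrable_prod_iff' hmeas.aestronglyMeasurable]
  refine ⟨ae_of_all _ fun p ↦
    (integrableOn_weeKernel_Ioi (c := p.1 - p.2)).const_mul (pairDensity p), ?_⟩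
  have hnorm : ∀ p : ℝ × ℝ, ∫ ϱ in Ioi 0, ‖pairDensity p * weeKernel ϱ (p.1 - p.2)‖
      = pairDensity p * |p.1 - p.2| := fun p ↦ by
    simp_rw [norm_of_nonneg (mul_nonneg (pairDensity_nonneg p) (weeKernel_nonneg _))]
    rw [MeasureTheory.integral_const_mul, integral_weeKernel_Ioi]
  simp only [Function.uncurry_apply_pair, hnorm]
  exact continuous_pairDensity_mul_abs_sub.integrableOn_Ioc_prod_Ioc _ _ _ _

lemma integral_Ioi_setIntegral_pairDensity_mul_weeKernel :
    ∫ ϱ in Ioi 0, ∫ p in Q, pairDensity p * weeKernel ϱ (p.1 - p.2)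
      = ∫ p in Q, pairDensity p * |p.1 - p.2| := by
  rw [integral_integral_swap integrable_pairDensity_mul_weeKernel]
  congr 1 with p
  rw [MeasureTheory.integral_const_mul, integral_weeKernel_Ioi]

lemma setIntegral_pairDensity_mul_abs_sub :
    ∫ p in Q, pairDensity p * |p.1 - p.2| = 1 / 12 - 5 / (16 * π ^ 2) := by
  rw [← intervalIntegral_intervalIntegral_eq_setIntegral_prod (by norm_num) (by norm_num)
    (continuous_pairDensity_mul_abs_sub.integrableOn_Ioc_prod_Ioc _ _ _ _),
    ← integral_cos_sq_mul_integral_cos_sq_mul_abs_sub]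
  simp only [pairDensity, mul_assoc, intervalIntegral.integral_const_mul]

/-- `W_ee(ϱ) := 1 - ϱ V_ee^1(ϱ)` satisfies `0 ≤ W_ee ≤ 1` on `(0,∞)` and
`∫_0^∞ W_ee(ϱ) dϱ = 1/3 - 5/(4π²)`. -/
theorem Wee_bounds_and_integral :
    (∀ ϱ : ℝ, 0 < ϱ → 0 ≤ 1 - ϱ * Vee1 ϱ ∧ 1 - ϱ * Vee1 ϱ ≤ 1) ∧
    ∫ ϱ in Set.Ioi (0 : ℝ), (1 - ϱ * Vee1 ϱ) = 1 / 3 - 5 / (4 * π ^ 2) := by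
  refine ⟨fun ϱ hϱ ↦ ?_, ?_⟩
  · obtain ⟨hlow, hhigh⟩ := setIntegral_pairDensity_mul_weeKernel_mem_Icc hϱ
    rw [one_sub_mul_Vee1 hϱ.ne']
    constructor <;> linarith
  · rw [setIntegral_congr_fun measurableSet_Ioi fun ϱ hϱ ↦ one_sub_mul_Vee1 (ne_of_gt hϱ),
      MeasureTheory.integral_const_mul, integral_Ioi_setIntegral_pairDensity_mul_weeKernel,
      setIntegral_pairDensity_mul_abs_sub]
    ring
end
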